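/- arXiv:1909.11153 — 4 statements merged into one kernel-verified Lean document; each statement's English description precedes it below -/
import Mathlib

section
/- For every real a > 0, the integral over (0,∞) of (cosh t)^{-2a} dt equals 4^{a-1} B(a,a), where B is the Beta function. In particular, for an integer d ≥ 1, ∫₀^∞ (cosh t)^{-d} dt = 2^{d-2} Γ(d/2)² / Γ(d). -/
/-!
The substitution `v = tanh² t` maps `(0, ∞)` onto `(0, 1)`, with `dv = 2 tanh t sech² t dt` and
`1 - v = sech² t`, so `(cosh t)^(-2a) dt = ½ v^(-1/2) (1 - v)^(a-1) dv` and the integral is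
`B(1/2, a) / 2`. Legendre's duplication formula `Γ(a) Γ(a + 1/2) = 2^(1-2a) √π Γ(2a)` turns this
into `4^(a-1) B(a, a)`; the integer case is `a = d/2`.
-/

open Real MeasureTheory Set

namespace Real

theorem hasDerivAt_tanh (x : ℝ) : HasDerivAt tanh (cosh x ^ 2)⁻¹ x := by
  rw [show tanh = sinh / cosh from funext tanh_eq_sinh_div_cosh]
  refine ((hasDerivAt_sinh x).div (hasDerivAt_cosh x) (cosh_pos x).ne').congr_deriv ?_
  rw [← sq, ← sq, cosh_sq_sub_sinh_sq, one_div]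

theorem one_sub_tanh_sq (x : ℝ) : 1 - tanh x ^ 2 = (cosh x ^ 2)⁻¹ := by
  rw [tanh_eq_sinh_div_cosh]
  field_simp
  linarith [cosh_sq_sub_sinh_sq x]

theorem tanh_pos {x : ℝ} (hx : 0 < x) : 0 < tanh x := by
  rw [tanh_eq_sinh_div_cosh]
  exact div_pos (sinh_pos_iff.mpr hx) (cosh_pos x)

theorem image_tanh_sq_Ioi : (fun t ↦ tanh t ^ 2) '' Ioi 0 = Ioo 0 1 := by
  refine Subset.antisymm ?_ fun v ⟨hv0, hv1⟩ ↦ ?_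
  · rintro _ ⟨t, ht, rfl⟩
    exact ⟨pow_pos (tanh_pos ht) 2, tanh_sq_lt_one t⟩
  · have hsqrt : √v ∈ Ioo 0 1 := ⟨sqrt_pos.mpr hv0, (sqrt_lt' one_pos).mpr (by simpa)⟩
    refine ⟨artanh √v, artanh_pos hsqrt, ?_⟩
    dsimp only
    rw [tanh_artanh ⟨by linarith [hsqrt.1], hsqrt.2⟩, sq_sqrt hv0.le]

theorem injOn_tanh_sq_Ioi : InjOn (fun t ↦ tanh t ^ 2) (Ioi 0) := fun _ hs _ ht hst ↦
  tanh_injective <| (sq_eq_sq₀ (tanh_pos hs).le (tanh_pos ht).le).mp hst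

theorem four_rpow (x : ℝ) : (4 : ℝ) ^ x = 2 ^ (2 * x) := by
  rw [show (2 : ℝ) * x = (2 : ℕ) * x by norm_num, rpow_natCast_mul zero_le_two]
  norm_num

theorem integral_rpow_mul_one_sub_rpow {u v : ℝ} (hu : 0 < u) (hv : 0 < v) :
    ∫ x in Ioo (0 : ℝ) 1, x ^ (u - 1) * (1 - x) ^ (v - 1) =
      Gamma u * Gamma v / Gamma (u + v) := by
  have hcast : Complex.betaIntegral u v =
      ↑(∫ x in Ioo (0 : ℝ) 1, x ^ (u - 1) * (1 - x) ^ (v - 1)) := by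
    rw [Complex.betaIntegral, intervalIntegral.integral_of_le zero_le_one,
      integral_Ioc_eq_integral_Ioo, ← integral_complex_ofReal]
    refine setIntegral_congr_fun measurableSet_Ioo fun x ⟨hx0, hx1⟩ ↦ ?_
    push_cast [Complex.ofReal_cpow hx0.le, Complex.ofReal_cpow (sub_pos.mpr hx1).le]
    rfl
  apply Complex.ofReal_injective
  rw [← hcast, Complex.betaIntegral_eq_Gamma_mul_div _ _ (by simpa) (by simpa)]
  push_cast [← Complex.Gamma_ofReal]
  rfl

theorem Gamma_one_half_mul_Gamma_div_Gamma_add_half {a : ℝ} (ha : 0 < a) :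
    Gamma (1 / 2) * Gamma a / Gamma (1 / 2 + a) =
      2 ^ (2 * a - 1) * (Gamma a ^ 2 / Gamma (2 * a)) := by
  have hdup := Gamma_mul_Gamma_add_half a
  have hpow : (2 : ℝ) ^ (2 * a - 1) * 2 ^ (1 - 2 * a) = 1 := by
    rw [← rpow_add two_pos]
    norm_num
  rw [Gamma_one_half_eq, add_comm (1 / 2) a, mul_div_assoc', div_eq_div_iff
    (Gamma_pos_of_pos (by positivity)).ne' (Gamma_pos_of_pos (by positivity)).ne']
  linear_combination (-(2 : ℝ) ^ (2 * a - 1) * Gamma a) * hdup - √π * Gamma a * Gamma (2 * a) * hpow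

theorem integral_cosh_rpow_neg_two_mul_eq_half_beta_integral (a : ℝ) :
    ∫ t in Ioi (0 : ℝ), cosh t ^ (-(2 * a)) =
      (∫ v in Ioo (0 : ℝ) 1, v ^ ((1 : ℝ) / 2 - 1) * (1 - v) ^ (a - 1)) / 2 := by
  rw [← image_tanh_sq_Ioi, integral_image_eq_integral_abs_deriv_smul (f := fun t ↦ tanh t ^ 2)
    measurableSet_Ioi (fun t _ ↦ ((hasDerivAt_tanh t).pow 2).hasDerivWithinAt) injOn_tanh_sq_Ioi,
    eq_div_iff two_ne_zero, ← integral_mul_const]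
  refine setIntegral_congr_fun measurableSet_Ioi fun t (ht : 0 < t) ↦ ?_
  have hc := cosh_pos t
  have hth := tanh_pos ht
  have hsqrt : (tanh t ^ 2) ^ ((1 : ℝ) / 2 - 1) = (tanh t)⁻¹ := by
    rw [← rpow_natCast, ← rpow_mul hth.le]
    norm_num [rpow_neg_one]
  have hcosh : ((cosh t ^ 2)⁻¹) ^ (a - 1) = cosh t ^ (-(2 * a)) * cosh t ^ 2 := by
    rw [← rpow_natCast, ← rpow_neg_one, ← rpow_mul hc.le, ← rpow_mul hc.le, ← rpow_add hc]
    congr 1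
    push_cast
    ring
  simp only [smul_eq_mul, one_sub_tanh_sq, hsqrt, hcosh]
  rw [abs_of_pos (by positivity)]
  field_simp
  norm_num

theorem integral_cosh_rpow_neg_two_mul {a : ℝ} (ha : 0 < a) :
    ∫ t in Ioi (0 : ℝ), cosh t ^ (-(2 * a)) = 4 ^ (a - 1) * (Gamma a ^ 2 / Gamma (2 * a)) := by
  rw [integral_cosh_rpow_neg_two_mul_eq_half_beta_integral,
    integral_rpow_mul_one_sub_rpow one_half_pos ha, Gamma_one_half_mul_Gamma_div_Gamma_add_half ha,
    four_rpow, mul_div_right_comm, ← rpow_sub_one two_ne_zero]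
  ring_nf

end Real

theorem integral_cosh_rpow (a : ℝ) (ha : 0 < a) :
    (∫ t in Set.Ioi (0 : ℝ), (Real.cosh t) ^ (-(2 * a)) =
      4 ^ (a - 1) * (Real.Gamma a ^ 2 / Real.Gamma (2 * a))) ∧
    ∀ d : ℕ, 1 ≤ d →
      ∫ t in Set.Ioi (0 : ℝ), (Real.cosh t) ^ (-(d : ℝ)) =
        2 ^ ((d : ℝ) - 2) * Real.Gamma ((d : ℝ) / 2) ^ 2 / Real.Gamma d := by
  refine ⟨integral_cosh_rpow_neg_two_mul ha, fun d hd ↦ ?_⟩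
  have h := integral_cosh_rpow_neg_two_mul (a := d / 2) (by positivity)
  rw [mul_div_cancel₀ _ two_ne_zero] at h
  rw [h, four_rpow, mul_sub, mul_div_cancel₀ _ two_ne_zero, mul_one, mul_div_assoc]
end

section
/- For every real q with 1 < q ≤ 2, one has (q+3)(q-1)^{1/q - 1} ≤ 6. -/
/-! With `t = q - 1` and `a = (q - 1) / q` the claim reads `(q + 3) * t ^ (-a) ≤ 6`. Raising it to
a suitable power `n` with `n * a ≤ 1` and applying Bernoulli's inequality `(1 + s) ^ (n * a) ≤
1 + n * a * s` to `1 + s = t⁻¹` turns it into the polynomial inequality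
`(q + 3) ^ n * (q + n * (2 - q)) ≤ 6 ^ n * q`; the exponents `n = 4, 3, 1` cover
`q ≤ 4/3`, `4/3 ≤ q ≤ 3/2` and `3/2 ≤ q` respectively. -/

open Real

lemma rpow_neg_le_one_add_mul {t a : ℝ} (ht : 0 < t) (ha0 : 0 ≤ a) (ha1 : a ≤ 1) :
    t ^ (-a) ≤ 1 + a * (t⁻¹ - 1) := by
  have hs : -1 ≤ t⁻¹ - 1 := by linarith [inv_pos.2 ht]
  calc t ^ (-a) = (1 + (t⁻¹ - 1)) ^ a := by rw [rpow_neg ht.le, add_sub_cancel, inv_rpow ht.le]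
    _ ≤ 1 + a * (t⁻¹ - 1) := rpow_one_add_le_one_add_mul_self hs ha0 ha1

lemma mul_rpow_neg_le_of_pow_mul_le {t a c M : ℝ} {n : ℕ} (hn : n ≠ 0) (ht : 0 < t)
    (ha : 0 ≤ a) (hna : n * a ≤ 1) (hc : 0 ≤ c) (hM : 0 ≤ M)
    (h : c ^ n * (1 + n * a * (t⁻¹ - 1)) ≤ M ^ n) :
    c * t ^ (-a) ≤ M := by
  refine le_of_pow_le_pow_left₀ hn hM ?_
  calc (c * t ^ (-a)) ^ n = c ^ n * t ^ (-(n * a)) := by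
        rw [mul_pow, ← rpow_natCast (t ^ _), ← rpow_mul ht.le]
        ring_nf
    _ ≤ c ^ n * (1 + n * a * (t⁻¹ - 1)) := by
        gcongr
        exact rpow_neg_le_one_add_mul ht (by positivity) hna
    _ ≤ M ^ n := h

lemma bellman_constant_le_of_pow_mul_le {q : ℝ} (n : ℕ) (hn : n ≠ 0) (hq : 1 < q)
    (hnq : n * (q - 1) ≤ q) (h : (q + 3) ^ n * (q + n * (2 - q)) ≤ 6 ^ n * q) :
    (q + 3) * (q - 1) ^ (1 / q - 1) ≤ 6 := by
  have hq0 : 0 < q := by linarith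
  have ht : 0 < q - 1 := by linarith
  have hexp : 1 / q - 1 = -((q - 1) / q) := by field_simp; ring
  have hbern : 1 + n * ((q - 1) / q) * ((q - 1)⁻¹ - 1) = (q + n * (2 - q)) / q := by
    field_simp; ring
  rw [hexp]
  refine mul_rpow_neg_le_of_pow_mul_le hn ht (by positivity) ?_ (by linarith) (by norm_num) ?_
  · rwa [← mul_div_assoc, div_le_one hq0]
  · rwa [hbern, ← mul_div_assoc, div_le_iff₀ hq0]

theorem bellman_constant_inequality_general (q : ℝ) (hq1 : 1 < q) :
    (q + 3) * (q - 1) ^ (1 / q - 1) ≤ 6 := by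
  rcases le_or_gt q (4 / 3) with hq43 | hq43
  · refine bellman_constant_le_of_pow_mul_le 4 (by norm_num) hq1 (by push_cast; linarith) ?_
    push_cast
    nlinarith [mul_pos (sub_pos.2 hq1) (sub_pos.2 hq1), pow_pos (sub_pos.2 hq1) 3]
  rcases le_or_gt q (3 / 2) with hq32 | hq32
  · refine bellman_constant_le_of_pow_mul_le 3 (by norm_num) hq1 (by push_cast; linarith) ?_
    push_cast
    nlinarith [mul_pos (sub_pos.2 hq1) (sub_pos.2 hq1)]
  · refine bellman_constant_le_of_pow_mul_le 1 one_ne_zero hq1 (by push_cast; linarith) ?_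
    push_cast
    linarith

theorem bellman_constant_inequality (q : ℝ) (hq1 : 1 < q) (hq2 : q ≤ 2) :
    (q + 3) * (q - 1) ^ (1 / q - 1) ≤ 6 :=
  bellman_constant_inequality_general q hq1
end

section
/- Let d ≥ 1, t > 0, and define K_t(x,y) = C_d (sinh 2t)^{-d/2} exp(-|x-y|²/(4 tanh t) - (tanh t/4)|x+y|²) with C_d = (2π)^{-d/2} π^{-1/2}. Then for every y ∈ ℝ^d, ∫_{ℝ^d} |x - y| K_t(x,y) dx ≤ (2/√π) · (Γ((d+1)/2)/Γ(d/2)) · √(tanh t) / (cosh t)^d. -/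
/-!
Dropping the factor `exp (-(tanh t / 4) |x + y|²) ≤ 1` and using `sinh 2t = 2 tanh t cosh² t`
bounds `K_t(·, y)` by `π^{-1/2} (cosh t)^{-d}` times the Euclidean heat kernel at time `tanh t`
centred at `y`. The first moment of the heat kernel at time `s` is `2 √s Γ((d+1)/2) / Γ(d/2)`,
computed in polar coordinates from `∫₀^∞ r^d e^{-b r²} dr = Γ((d+1)/2) / (2 b^{(d+1)/2})`.
-/

open Real MeasureTheory

/-- The normalized Mehler kernel `K_t(x,y)`. -/
noncomputable def mehlerKernel (d : ℕ) (t : ℝ) (x y : EuclideanSpace ℝ (Fin d)) : ℝ :=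
  (2 * Real.pi) ^ (-(d : ℝ) / 2) * Real.pi ^ (-(1 : ℝ) / 2) *
    (Real.sinh (2 * t)) ^ (-(d : ℝ) / 2) *
    Real.exp (-‖x - y‖ ^ 2 / (4 * Real.tanh t) - Real.tanh t / 4 * ‖x + y‖ ^ 2)

open Set Module

section HeatKernel

variable {V : Type*} [NormedAddCommGroup V] [InnerProductSpace ℝ V]

noncomputable def heatKernel (s : ℝ) (x : V) : ℝ :=
  (4 * π * s) ^ (-(finrank ℝ V : ℝ) / 2) * rexp (-‖x‖ ^ 2 / (4 * s))

lemma heatKernel_eq {s : ℝ} (x : V) :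
    heatKernel s x =
      (4 * π * s) ^ (-(finrank ℝ V : ℝ) / 2) * rexp (-(4 * s)⁻¹ * ‖x‖ ^ 2) := by
  rw [heatKernel]
  congr 2
  ring

variable [FiniteDimensional ℝ V] [MeasurableSpace V] [BorelSpace V] [Nontrivial V]

lemma integrable_norm_mul_exp_neg_mul_sq_norm {b : ℝ} (hb : 0 < b) :
    Integrable (fun x : V ↦ ‖x‖ * rexp (-b * ‖x‖ ^ 2)) := by
  rw [integrable_fun_norm_addHaar volume (f := fun r ↦ r * rexp (-b * r ^ 2))]
  refine (integrableOn_rpow_mul_exp_neg_mul_sq hb (s := finrank ℝ V)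
    (neg_one_lt_zero.trans_le (Nat.cast_nonneg _))).congr_fun (fun r _ ↦ ?_) measurableSet_Ioi
  simp only [smul_eq_mul, ← mul_assoc, pow_sub_one_mul finrank_pos.ne', rpow_natCast]

theorem integral_norm_mul_exp_neg_mul_sq_norm {b : ℝ} (hb : 0 < b) :
    ∫ x : V, ‖x‖ * rexp (-b * ‖x‖ ^ 2) =
      (π / b) ^ (finrank ℝ V / 2 : ℝ) / √b *
        (Gamma ((finrank ℝ V + 1) / 2) / Gamma (finrank ℝ V / 2)) := by
  have hn : (0 : ℝ) < finrank ℝ V := Nat.cast_pos.mpr finrank_pos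
  have hball : volume.real (Metric.ball (0 : V) 1) =
      π ^ (finrank ℝ V / 2 : ℝ) / Gamma (finrank ℝ V / 2 + 1) := by
    rw [measureReal_def, InnerProductSpace.volume_ball, ENNReal.ofReal_one, one_pow, one_mul,
      ENNReal.toReal_ofReal (by positivity), sqrt_eq_rpow, ← rpow_mul_natCast pi_pos.le]
    ring_nf
  have hradial : ∫ r in Ioi (0 : ℝ), r ^ (finrank ℝ V - 1) • (r * rexp (-b * r ^ 2)) =
      b ^ (-(finrank ℝ V + 1) / 2 : ℝ) * (1 / 2) * Gamma ((finrank ℝ V + 1) / 2) := by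
    rw [← integral_rpow_mul_exp_neg_mul_rpow two_pos (by linarith) hb]
    refine setIntegral_congr_fun measurableSet_Ioi fun r _ ↦ ?_
    rw [smul_eq_mul, ← mul_assoc, pow_sub_one_mul finrank_pos.ne', rpow_natCast, rpow_two]
  rw [integral_fun_norm_addHaar volume (fun r ↦ r * rexp (-b * r ^ 2)), hball, hradial,
    Gamma_add_one (half_pos hn).ne', nsmul_eq_mul, smul_eq_mul, div_rpow pi_pos.le hb.le,
    sqrt_eq_rpow, show -(finrank ℝ V + 1) / 2 = -(finrank ℝ V / 2 + 1 / 2 : ℝ) by ring,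
    rpow_neg hb.le, rpow_add hb]
  have hΓ := Gamma_pos_of_pos (half_pos hn)
  field_simp

lemma integrable_norm_mul_heatKernel {s : ℝ} (hs : 0 < s) :
    Integrable (fun x : V ↦ ‖x‖ * heatKernel s x) := by
  simp_rw [heatKernel_eq, mul_left_comm ‖_‖]
  exact (integrable_norm_mul_exp_neg_mul_sq_norm (by positivity)).const_mul _

theorem integral_norm_mul_heatKernel {s : ℝ} (hs : 0 < s) :
    ∫ x : V, ‖x‖ * heatKernel s x =
      2 * √s * (Gamma ((finrank ℝ V + 1) / 2) / Gamma (finrank ℝ V / 2)) := by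
  simp_rw [heatKernel_eq, mul_left_comm ‖_‖]
  rw [integral_const_mul, integral_norm_mul_exp_neg_mul_sq_norm (by positivity),
    show π / (4 * s)⁻¹ = 4 * π * s by field_simp, sqrt_inv, sqrt_mul' _ hs.le,
    show √4 = 2 by rw [show (4 : ℝ) = 2 ^ 2 by norm_num, sqrt_sq two_pos.le], ← mul_assoc,
    neg_div, rpow_neg (by positivity)]
  field_simp

end HeatKernel

lemma tanh_pos_of_pos {t : ℝ} (ht : 0 < t) : 0 < tanh t := by
  rw [tanh_eq_sinh_div_cosh]
  exact div_pos (sinh_pos_iff.mpr ht) (cosh_pos t)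

lemma two_pi_rpow_mul_sinh_two_mul_rpow (n : ℕ) {t : ℝ} (ht : 0 < t) :
    (2 * π) ^ (-(n : ℝ) / 2) * sinh (2 * t) ^ (-(n : ℝ) / 2) =
      (4 * π * tanh t) ^ (-(n : ℝ) / 2) / cosh t ^ n := by
  have hc := cosh_pos t
  have hτ := tanh_pos_of_pos ht
  have hsinh : 2 * π * sinh (2 * t) = 4 * π * tanh t * cosh t ^ 2 := by
    rw [sinh_two_mul, tanh_eq_sinh_div_cosh]; field_simp; ring
  rw [← mul_rpow (by positivity) (sinh_pos_iff.mpr (by positivity)).le, hsinh,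
    mul_rpow (by positivity) (by positivity), ← rpow_natCast_mul hc.le,
    show ((2 : ℕ) : ℝ) * (-(n : ℝ) / 2) = -(n : ℝ) by push_cast; ring, rpow_neg hc.le,
    rpow_natCast, ← div_eq_mul_inv]

lemma mehlerKernel_nonneg (d : ℕ) {t : ℝ} (ht : 0 < t) (x y : EuclideanSpace ℝ (Fin d)) :
    0 ≤ mehlerKernel d t x y := by
  have hsinh := sinh_pos_iff.mpr (mul_pos two_pos ht)
  unfold mehlerKernel
  positivity

lemma mehlerKernel_le_heatKernel (d : ℕ) {t : ℝ} (ht : 0 < t)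
    (x y : EuclideanSpace ℝ (Fin d)) :
    mehlerKernel d t x y ≤ π ^ (-(1 : ℝ) / 2) / cosh t ^ d * heatKernel (tanh t) (x - y) := by
  have hτ := tanh_pos_of_pos ht
  rw [mehlerKernel, heatKernel, finrank_euclideanSpace_fin, mul_right_comm _ (π ^ _),
    two_pi_rpow_mul_sinh_two_mul_rpow d ht, div_mul_eq_mul_div, mul_div_right_comm, mul_assoc]
  calc _ = π ^ (-(1 : ℝ) / 2) / cosh t ^ d * ((4 * π * tanh t) ^ (-(d : ℝ) / 2) *
        rexp (-‖x - y‖ ^ 2 / (4 * tanh t) - tanh t / 4 * ‖x + y‖ ^ 2)) := by ring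
    _ ≤ _ := by gcongr; exact sub_le_self _ (by positivity)

theorem mehler_kernel_first_moment (d : ℕ) (hd : 1 ≤ d) (t : ℝ) (ht : 0 < t)
    (y : EuclideanSpace ℝ (Fin d)) :
    ∫ x : EuclideanSpace ℝ (Fin d), ‖x - y‖ * mehlerKernel d t x y ≤
      (2 / Real.sqrt Real.pi) *
        (Real.Gamma (((d : ℝ) + 1) / 2) / Real.Gamma ((d : ℝ) / 2)) *
        (Real.sqrt (Real.tanh t) / Real.cosh t ^ d) := by
  have : Nontrivial (EuclideanSpace ℝ (Fin d)) :=
    Module.nontrivial_of_finrank_pos (R := ℝ) (by rwa [finrank_euclideanSpace_fin])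
  have hτ := tanh_pos_of_pos ht
  set c := π ^ (-(1 : ℝ) / 2) / cosh t ^ d
  calc ∫ x, ‖x - y‖ * mehlerKernel d t x y
      ≤ ∫ x, c * (‖x - y‖ * heatKernel (tanh t) (x - y)) :=
        integral_mono_of_nonneg
          (ae_of_all _ fun x ↦ mul_nonneg (norm_nonneg _) (mehlerKernel_nonneg d ht x y))
          (((integrable_norm_mul_heatKernel hτ).comp_sub_right y).const_mul c)
          (ae_of_all _ fun x ↦ by
            dsimp only
            rw [mul_left_comm]
            exact mul_le_mul_of_nonneg_left (mehlerKernel_le_heatKernel d ht x y) (norm_nonneg _))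
    _ = c * (2 * √(tanh t) * (Gamma ((d + 1) / 2) / Gamma (d / 2))) := by
        rw [integral_const_mul,
          integral_sub_right_eq_self (fun x ↦ ‖x‖ * heatKernel (tanh t) x),
          integral_norm_mul_heatKernel hτ, finrank_euclideanSpace_fin]
    _ = _ := by
        simp only [c]
        rw [neg_div, rpow_neg pi_pos.le, ← sqrt_eq_rpow]
        ring
end

section
/- For every x ∈ ℝ^d with d ≥ 1, ∫_{ℝ^d} |x| ∫₀^∞ t^{-1/2} K_t(x,y) dt dy ≤ 1/√π + √2, where K_t(x,y) = C_d (sinh 2t)^{-d/2} exp(-|x-y|²/(4 tanh t) - (tanh t/4)|x+y|²) and C_d = (2π)^{-d/2} π^{-1/2}. -/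
/-!
Integrate out `y` first (Tonelli). Completing the square gives
`∫ K_t(x,y) dy = π^{-1/2} (cosh 2t)^{-d/2} exp (-tanh (2t) |x|² / 2)`, and with `r = |x|`
it remains to bound `∫₀^∞ r t^{-1/2} π^{-1/2} (cosh 2t)^{-d/2} exp (-tanh (2t) r² / 2) dt`.
We split at `t = 1/2` instead of at `τ`: `tanh 2t ≥ t` still holds on `(0, 1/2]`, where moreover
`(cosh 2t)^{-d/2} ≤ 1`, so the Gamma integral `∫₀^∞ r t^{-1/2} e^{-r² t/2} dt = √(2π)` bounds this
piece by `√2`. On `(1/2, ∞)`, `t^{-1/2} ≤ √2`, `(cosh 2t)^{-d/2} ≤ √2 e^{-t}` and `tanh 2t ≥ 3/5`,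
so `r e^{-tanh (2t) r²/2} ≤ √(5/(3e))`, and this piece is at most `2 √(5/3) / (e √π) ≤ 1/√π`.
-/

open Real MeasureTheory

open Set
open scoped RealInnerProductSpace

theorem ofReal_integral_le_lintegral_ofReal {α : Type*} [MeasurableSpace α] {μ : Measure α}
    (f : α → ℝ) : ENNReal.ofReal (∫ a, f a ∂μ) ≤ ∫⁻ a, ENNReal.ofReal (f a) ∂μ := by
  by_cases hf : Integrable f μ
  · rw [integral_eq_lintegral_pos_part_sub_lintegral_neg_part hf]
    exact (ENNReal.ofReal_le_ofReal (sub_le_self _ ENNReal.toReal_nonneg)).trans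
      ENNReal.ofReal_toReal_le
  · simp [integral_undef hf]

theorem lintegral_ofReal_exp_neg_mul_sq_norm_sub {V : Type*} [NormedAddCommGroup V]
    [InnerProductSpace ℝ V] [FiniteDimensional ℝ V] [MeasurableSpace V] [BorelSpace V]
    {b : ℝ} (hb : 0 < b) (w : V) :
    ∫⁻ v, ENNReal.ofReal (exp (-b * ‖v - w‖ ^ 2)) =
      ENNReal.ofReal ((π / b) ^ (Module.finrank ℝ V / 2 : ℝ)) := by
  have hint : Integrable fun v : V => exp (-b * ‖v‖ ^ 2) := by
    refine Integrable.of_integral_ne_zero ?_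
    rw [GaussianFourier.integral_rexp_neg_mul_sq_norm hb]
    positivity
  rw [lintegral_sub_right_eq_self (fun v => ENNReal.ofReal (exp (-b * ‖v‖ ^ 2))) w,
    ← ofReal_integral_eq_lintegral_ofReal hint (ae_of_all _ fun _ => (exp_pos _).le),
    GaussianFourier.integral_rexp_neg_mul_sq_norm hb]

theorem lintegral_rpow_neg_half_mul_exp_neg_mul {b : ℝ} (hb : 0 < b) :
    ∫⁻ t in Ioi 0, ENNReal.ofReal (t ^ (-(1 / 2) : ℝ) * exp (-(b * t))) =
      ENNReal.ofReal √(π / b) := by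
  have h := integral_rpow_mul_exp_neg_mul_Ioi (a := 1 / 2) (by norm_num) hb
  rw [show (1 / 2 - 1 : ℝ) = -(1 / 2) by norm_num, Gamma_one_half_eq, ← sqrt_eq_rpow,
    ← sqrt_mul (by positivity), one_div_mul_eq_div] at h
  have hint : IntegrableOn (fun t : ℝ => t ^ (-(1 / 2) : ℝ) * exp (-(b * t))) (Ioi 0) :=
    Integrable.of_integral_ne_zero (by rw [h]; positivity)
  rw [← h, ofReal_integral_eq_lintegral_ofReal hint]
  filter_upwards [ae_restrict_mem measurableSet_Ioi] with t ht
  exact mul_nonneg (rpow_nonneg (le_of_lt ht) _) (exp_nonneg _)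

theorem lintegral_Ioi_exp_neg (c : ℝ) :
    ∫⁻ t in Ioi c, ENNReal.ofReal (exp (-t)) = ENNReal.ofReal (exp (-c)) := by
  have hint : IntegrableOn (fun t : ℝ => exp (-t)) (Ioi c) :=
    Integrable.of_integral_ne_zero (by rw [integral_exp_neg_Ioi]; positivity)
  rw [← integral_exp_neg_Ioi,
    ofReal_integral_eq_lintegral_ofReal hint (ae_of_all _ fun _ => exp_nonneg _)]

namespace Real

@[fun_prop]
theorem measurable_tanh : Measurable tanh := by
  simp_rw [funext tanh_eq_sinh_div_cosh]
  fun_prop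

theorem tanh_eq_exp_two_mul (x : ℝ) : tanh x = (exp (2 * x) - 1) / (exp (2 * x) + 1) := by
  rw [tanh_eq, div_eq_div_iff (by positivity) (by positivity),
    show exp (2 * x) = exp x * exp x by rw [← exp_add]; ring_nf, exp_neg]
  field_simp

theorem self_le_tanh_two_mul {t : ℝ} (h0 : 0 ≤ t) (h1 : t ≤ 1 / 2) : t ≤ tanh (2 * t) := by
  have hexp : 1 + 4 * t ≤ exp (4 * t) := by linarith [add_one_le_exp (4 * t)]
  rw [tanh_eq_exp_two_mul, ← mul_assoc, le_div_iff₀ (by positivity)]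
  norm_num
  nlinarith [mul_le_mul_of_nonneg_left hexp (by linarith : 0 ≤ 1 - t)]

theorem three_fifths_le_tanh_two_mul {t : ℝ} (h : 1 / 2 ≤ t) : 3 / 5 ≤ tanh (2 * t) := by
  have hexp : 2 ≤ exp (2 * t) := by linarith [add_one_le_exp (2 * t)]
  rw [tanh_eq_exp_two_mul, le_div_iff₀ (by positivity),
    show exp (2 * (2 * t)) = exp (2 * t) ^ 2 by rw [← exp_nat_mul]; ring_nf]
  nlinarith

theorem cosh_two_mul_rpow_neg_le {s : ℝ} (hs : 1 ≤ s) (t : ℝ) :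
    cosh (2 * t) ^ (-s / 2) ≤ √2 * exp (-t) := by
  have hcosh := cosh_pos (2 * t)
  have hexp : exp t ≤ √(2 * cosh (2 * t)) := by
    refine le_sqrt_of_sq_le ?_
    rw [cosh_eq, ← exp_nat_mul]
    push_cast
    linarith [exp_pos (-(2 * t))]
  calc cosh (2 * t) ^ (-s / 2) ≤ cosh (2 * t) ^ (-(1 : ℝ) / 2) :=
        rpow_le_rpow_of_exponent_le (one_le_cosh _) (by linarith)
    _ = √2 * (√(2 * cosh (2 * t)))⁻¹ := by
        rw [neg_div, rpow_neg hcosh.le, ← sqrt_eq_rpow, sqrt_mul zero_le_two, mul_inv,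
          ← mul_assoc, mul_inv_cancel₀ (by positivity), one_mul]
    _ ≤ √2 * exp (-t) := by
        rw [exp_neg]
        gcongr

theorem mul_exp_neg_mul_sq_le {a : ℝ} (ha : 0 < a) (u : ℝ) :
    u * exp (-(a * u ^ 2)) ≤ √(1 / (2 * a * exp 1)) := by
  refine le_sqrt_of_sq_le ?_
  have h := mul_exp_neg_le_exp_neg_one (2 * a * u ^ 2)
  rw [exp_neg 1] at h
  rw [le_div_iff₀ (by positivity), mul_pow, ← exp_nat_mul]
  calc u ^ 2 * exp (2 * -(a * u ^ 2)) * (2 * a * exp 1)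
      = 2 * a * u ^ 2 * exp (-(2 * a * u ^ 2)) * exp 1 := by ring_nf
    _ ≤ (exp 1)⁻¹ * exp 1 := by gcongr
    _ = 1 := inv_mul_cancel₀ (exp_pos 1).ne'

end Real

-- Completing the square in `y`: `K_t(x, ·)` is a Gaussian of variance `tanh 2t`
-- centred at `x / cosh 2t`.
theorem mehler_exponent_eq {E : Type*} [NormedAddCommGroup E] [InnerProductSpace ℝ E]
    {t : ℝ} (ht : t ≠ 0) (x y : E) :
    ‖x - y‖ ^ 2 / (4 * tanh t) + tanh t / 4 * ‖x + y‖ ^ 2 =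
      cosh (2 * t) / (2 * sinh (2 * t)) * ‖y - (cosh (2 * t))⁻¹ • x‖ ^ 2 +
        tanh (2 * t) / 2 * ‖x‖ ^ 2 := by
  have hs : sinh t ≠ 0 := by simpa using ht
  have hc : cosh t ≠ 0 := (cosh_pos t).ne'
  have hc2 : cosh t ^ 2 + sinh t ^ 2 ≠ 0 := by positivity
  rw [norm_sub_sq_real, norm_add_sq_real, norm_sub_sq_real, norm_smul, inner_smul_right,
    real_inner_comm, tanh_eq_sinh_div_cosh, tanh_eq_sinh_div_cosh, cosh_two_mul, sinh_two_mul,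
    Real.norm_eq_abs, abs_of_pos (by positivity)]
  field_simp
  linear_combination (4 * ‖x‖ ^ 2 * (cosh t ^ 2 - sinh t ^ 2 + 1) -
    8 * ⟪y, x⟫ * (cosh t ^ 2 + sinh t ^ 2)) * cosh_sq t

theorem mehlerKernel_eq {d : ℕ} {t : ℝ} (ht : 0 < t) (x y : EuclideanSpace ℝ (Fin d)) :
    mehlerKernel d t x y =
      (2 * π * sinh (2 * t)) ^ (-(d : ℝ) / 2) * ((√π)⁻¹ * exp (-(tanh (2 * t) * ‖x‖ ^ 2 / 2))) *
        exp (-(cosh (2 * t) / (2 * sinh (2 * t))) * ‖y - (cosh (2 * t))⁻¹ • x‖ ^ 2) := by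
  rw [mehlerKernel, mul_rpow (by positivity) (sinh_pos_iff.mpr (by positivity)).le,
    neg_div 2 (1 : ℝ), rpow_neg pi_pos.le, ← sqrt_eq_rpow]
  have hexponent : -‖x - y‖ ^ 2 / (4 * tanh t) - tanh t / 4 * ‖x + y‖ ^ 2 =
      -(tanh (2 * t) * ‖x‖ ^ 2 / 2) +
        -(cosh (2 * t) / (2 * sinh (2 * t))) * ‖y - (cosh (2 * t))⁻¹ • x‖ ^ 2 := by
    linear_combination -(mehler_exponent_eq ht.ne' x y)
  rw [hexponent, exp_add]
  ring

theorem measurable_mehlerKernel (d : ℕ) (x : EuclideanSpace ℝ (Fin d)) :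
    Measurable (Function.uncurry fun y t =>
      ENNReal.ofReal (t ^ (-(1 / 2) : ℝ) * mehlerKernel d t x y)) := by
  unfold mehlerKernel Function.uncurry
  fun_prop

/-- `∫ K_t(x, y) dy`, as a function of `r = ‖x‖`. -/
noncomputable def mehlerMass (d : ℕ) (t r : ℝ) : ℝ :=
  (√π)⁻¹ * cosh (2 * t) ^ (-(d : ℝ) / 2) * exp (-(tanh (2 * t) * r ^ 2 / 2))

theorem mehlerMass_nonneg (d : ℕ) (t r : ℝ) : 0 ≤ mehlerMass d t r := by
  have hcosh := rpow_nonneg (cosh_pos (2 * t)).le (-(d : ℝ) / 2)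
  unfold mehlerMass
  positivity

theorem lintegral_mehlerKernel {d : ℕ} {t : ℝ} (ht : 0 < t) (x : EuclideanSpace ℝ (Fin d)) :
    ∫⁻ y, ENNReal.ofReal (mehlerKernel d t x y) = ENNReal.ofReal (mehlerMass d t ‖x‖) := by
  have hs : 0 < sinh (2 * t) := sinh_pos_iff.mpr (by positivity)
  have hb : 0 < cosh (2 * t) / (2 * sinh (2 * t)) := by positivity
  simp only [mehlerKernel_eq ht, ENNReal.ofReal_mul' (exp_nonneg _)]
  rw [lintegral_const_mul' _ _ ENNReal.ofReal_ne_top, lintegral_ofReal_exp_neg_mul_sq_norm_sub hb,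
    ← ENNReal.ofReal_mul (by positivity), finrank_euclideanSpace_fin]
  congr 1
  have hvariance : π / (cosh (2 * t) / (2 * sinh (2 * t))) =
      2 * π * sinh (2 * t) / cosh (2 * t) := by
    field_simp
  rw [mehlerMass, hvariance, div_rpow (by positivity) (cosh_pos _).le, neg_div,
    rpow_neg (by positivity), rpow_neg (cosh_pos _).le]
  field_simp

theorem lintegral_lintegral_mehlerKernel (d : ℕ) (x : EuclideanSpace ℝ (Fin d)) :
    ∫⁻ y, ∫⁻ t in Ioi 0, ENNReal.ofReal (t ^ (-(1 / 2) : ℝ) * mehlerKernel d t x y) =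
      ∫⁻ t in Ioi 0, ENNReal.ofReal (t ^ (-(1 / 2) : ℝ) * mehlerMass d t ‖x‖) := by
  rw [lintegral_lintegral_swap (measurable_mehlerKernel d x).aemeasurable]
  refine setLIntegral_congr_fun measurableSet_Ioi fun t (ht : 0 < t) => ?_
  simp only [ENNReal.ofReal_mul (rpow_nonneg ht.le _)]
  rw [lintegral_const_mul' _ _ ENNReal.ofReal_ne_top, lintegral_mehlerKernel ht]

theorem mul_rpow_mul_mehlerMass_le_of_le_half (d : ℕ) {r t : ℝ} (hr : 0 ≤ r) (ht0 : 0 < t)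
    (ht : t ≤ 1 / 2) :
    r * t ^ (-(1 / 2) : ℝ) * mehlerMass d t r ≤
      r * (√π)⁻¹ * (t ^ (-(1 / 2) : ℝ) * exp (-(r ^ 2 / 2 * t))) := by
  have hcosh : cosh (2 * t) ^ (-(d : ℝ) / 2) ≤ 1 :=
    rpow_le_one_of_one_le_of_nonpos (one_le_cosh _) (by linarith [d.cast_nonneg (α := ℝ)])
  have htanh : exp (-(tanh (2 * t) * r ^ 2 / 2)) ≤ exp (-(r ^ 2 / 2 * t)) := by
    gcongr
    nlinarith [self_le_tanh_two_mul ht0.le ht]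
  have hpow := rpow_nonneg ht0.le (-(1 / 2) : ℝ)
  calc r * t ^ (-(1 / 2) : ℝ) * mehlerMass d t r
      ≤ r * t ^ (-(1 / 2) : ℝ) * ((√π)⁻¹ * 1 * exp (-(r ^ 2 / 2 * t))) := by
        unfold mehlerMass
        gcongr
    _ = _ := by ring

theorem lintegral_Ioc_mehlerMass_le (d : ℕ) {r : ℝ} (hr : 0 < r) :
    ∫⁻ t in Ioc 0 (1 / 2), ENNReal.ofReal (r * t ^ (-(1 / 2) : ℝ) * mehlerMass d t r) ≤
      ENNReal.ofReal √2 := by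
  calc ∫⁻ t in Ioc 0 (1 / 2), ENNReal.ofReal (r * t ^ (-(1 / 2) : ℝ) * mehlerMass d t r)
      ≤ ∫⁻ t in Ioi 0, ENNReal.ofReal (r * (√π)⁻¹) *
          ENNReal.ofReal (t ^ (-(1 / 2) : ℝ) * exp (-(r ^ 2 / 2 * t))) := by
        refine (setLIntegral_mono' measurableSet_Ioc fun t ⟨ht0, ht⟩ => ?_).trans
          (lintegral_mono_set Ioc_subset_Ioi_self)
        rw [← ENNReal.ofReal_mul (by positivity)]
        exact ENNReal.ofReal_le_ofReal (mul_rpow_mul_mehlerMass_le_of_le_half d hr.le ht0 ht)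
    _ = ENNReal.ofReal √2 := by
        rw [lintegral_const_mul' _ _ ENNReal.ofReal_ne_top,
          lintegral_rpow_neg_half_mul_exp_neg_mul (by positivity),
          ← ENNReal.ofReal_mul (by positivity)]
        congr 1
        rw [div_div_eq_mul_div, sqrt_div' _ (by positivity), sqrt_mul pi_pos.le, sqrt_sq hr.le]
        field_simp

theorem mul_rpow_mul_mehlerMass_le_of_half_lt {d : ℕ} (hd : 1 ≤ d) {r t : ℝ} (hr : 0 ≤ r)
    (ht : 1 / 2 < t) :
    r * t ^ (-(1 / 2) : ℝ) * mehlerMass d t r ≤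
      (√π)⁻¹ * (2 * √(1 / (2 * (3 / 10) * exp 1))) * exp (-t) := by
  have ht0 : 0 < t := by linarith
  have hpow : t ^ (-(1 / 2) : ℝ) ≤ √2 := by
    rw [rpow_neg ht0.le, ← sqrt_eq_rpow, ← sqrt_inv]
    exact sqrt_le_sqrt (by rw [inv_le_comm₀ ht0 two_pos]; linarith)
  have hcosh := cosh_two_mul_rpow_neg_le (s := d) (by exact_mod_cast hd) t
  have hgauss : r * exp (-(tanh (2 * t) * r ^ 2 / 2)) ≤ √(1 / (2 * (3 / 10) * exp 1)) :=
    calc r * exp (-(tanh (2 * t) * r ^ 2 / 2)) ≤ r * exp (-(3 / 10 * r ^ 2)) := by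
          gcongr
          nlinarith [three_fifths_le_tanh_two_mul ht.le]
      _ ≤ _ := mul_exp_neg_mul_sq_le (by norm_num) r
  have hpow_nonneg := rpow_nonneg ht0.le (-(1 / 2) : ℝ)
  calc r * t ^ (-(1 / 2) : ℝ) * mehlerMass d t r
      = (√π)⁻¹ * t ^ (-(1 / 2) : ℝ) * cosh (2 * t) ^ (-(d : ℝ) / 2) *
          (r * exp (-(tanh (2 * t) * r ^ 2 / 2))) := by unfold mehlerMass; ring
    _ ≤ (√π)⁻¹ * √2 * (√2 * exp (-t)) * √(1 / (2 * (3 / 10) * exp 1)) := by gcongr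
    _ = _ := by
        linear_combination ((√π)⁻¹ * exp (-t) * √(1 / (2 * (3 / 10) * exp 1))) *
          mul_self_sqrt zero_le_two

theorem lintegral_Ioi_mehlerMass_le {d : ℕ} (hd : 1 ≤ d) {r : ℝ} (hr : 0 ≤ r) :
    ∫⁻ t in Ioi (1 / 2), ENNReal.ofReal (r * t ^ (-(1 / 2) : ℝ) * mehlerMass d t r) ≤
      ENNReal.ofReal (√π)⁻¹ := by
  calc ∫⁻ t in Ioi (1 / 2), ENNReal.ofReal (r * t ^ (-(1 / 2) : ℝ) * mehlerMass d t r)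
      ≤ ∫⁻ t in Ioi (1 / 2), ENNReal.ofReal ((√π)⁻¹ * (2 * √(1 / (2 * (3 / 10) * exp 1)))) *
          ENNReal.ofReal (exp (-t)) := by
        refine setLIntegral_mono' measurableSet_Ioi fun t (ht : 1 / 2 < t) => ?_
        rw [← ENNReal.ofReal_mul (by positivity)]
        exact ENNReal.ofReal_le_ofReal (mul_rpow_mul_mehlerMass_le_of_half_lt hd hr ht)
    _ ≤ ENNReal.ofReal (√π)⁻¹ := by
        rw [lintegral_const_mul' _ _ ENNReal.ofReal_ne_top, lintegral_Ioi_exp_neg,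
          ← ENNReal.ofReal_mul (by positivity), mul_assoc]
        refine ENNReal.ofReal_le_ofReal (mul_le_of_le_one_right (by positivity) ?_)
        refine (pow_le_one_iff_of_nonneg (by positivity) two_ne_zero).mp ?_
        rw [mul_pow, mul_pow, sq_sqrt (by positivity), ← exp_nat_mul,
          show ((2 : ℕ) : ℝ) * -(1 / 2) = -1 by norm_num, exp_neg 1]
        have := exp_one_gt_d9
        field_simp
        nlinarith

theorem lintegral_mul_rpow_mul_mehlerMass_le {d : ℕ} (hd : 1 ≤ d) (r : ℝ) :
    ∫⁻ t in Ioi 0, ENNReal.ofReal (r * t ^ (-(1 / 2) : ℝ) * mehlerMass d t r) ≤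
      ENNReal.ofReal (1 / √π + √2) := by
  rcases le_or_gt r 0 with hr | hr
  · calc ∫⁻ t in Ioi 0, ENNReal.ofReal (r * t ^ (-(1 / 2) : ℝ) * mehlerMass d t r)
        ≤ ∫⁻ t in Ioi 0, 0 := setLIntegral_mono' measurableSet_Ioi fun t (ht : 0 < t) =>
          (ENNReal.ofReal_of_nonpos (mul_nonpos_of_nonpos_of_nonneg
            (mul_nonpos_of_nonpos_of_nonneg hr (rpow_nonneg ht.le _)) (mehlerMass_nonneg d t r))).le
      _ ≤ _ := by simp
  rw [← Ioc_union_Ioi_eq_Ioi (by norm_num : (0 : ℝ) ≤ 1 / 2),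
    lintegral_union measurableSet_Ioi (Ioc_disjoint_Ioi le_rfl), one_div √π, add_comm (√π)⁻¹,
    ENNReal.ofReal_add (by positivity) (by positivity)]
  exact add_le_add (lintegral_Ioc_mehlerMass_le d hr) (lintegral_Ioi_mehlerMass_le hd hr.le)

theorem mehler_kernel_diagonal_bound (d : ℕ) (hd : 1 ≤ d)
    (x : EuclideanSpace ℝ (Fin d)) :
    ∫ y : EuclideanSpace ℝ (Fin d),
        ‖x‖ * ∫ t in Set.Ioi (0 : ℝ), t ^ (-(1 / 2) : ℝ) * mehlerKernel d t x y ≤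
      1 / Real.sqrt Real.pi + Real.sqrt 2 := by
  rw [← ENNReal.ofReal_le_ofReal_iff (by positivity)]
  calc ENNReal.ofReal (∫ y, ‖x‖ * ∫ t in Ioi 0, t ^ (-(1 / 2) : ℝ) * mehlerKernel d t x y)
      ≤ ∫⁻ y, ENNReal.ofReal ‖x‖ *
          ∫⁻ t in Ioi 0, ENNReal.ofReal (t ^ (-(1 / 2) : ℝ) * mehlerKernel d t x y) := by
        refine (ofReal_integral_le_lintegral_ofReal _).trans (lintegral_mono fun y => ?_)
        rw [ENNReal.ofReal_mul (norm_nonneg x)]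
        gcongr
        exact ofReal_integral_le_lintegral_ofReal _
    _ = ∫⁻ t in Ioi 0, ENNReal.ofReal (‖x‖ * t ^ (-(1 / 2) : ℝ) * mehlerMass d t ‖x‖) := by
        simp only [mul_assoc, ENNReal.ofReal_mul (norm_nonneg x)]
        rw [lintegral_const_mul' _ _ ENNReal.ofReal_ne_top, lintegral_lintegral_mehlerKernel,
          lintegral_const_mul' _ _ ENNReal.ofReal_ne_top]
    _ ≤ ENNReal.ofReal (1 / √π + √2) := lintegral_mul_rpow_mul_mehlerMass_le hd ‖x‖
end
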